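/- If a and b are real numbers such that the function f(x) = a x + b satisfies the functional equation (f(x))³ = 1 + 3x + x² f(x+2) for all real x, then a = 1 and b = 1. -/
import Mathlib

theorem linear_solution_of_cubic_functional_equation (a b : ℝ)
    (h : ∀ x : ℝ, (a * x + b) ^ 3 = 1 + 3 * x + x ^ 2 * (a * (x + 2) + b)) :
    a = 1 ∧ b = 1 := by
  have h0 := h 0
  have h1 := h (-1)
  have hb : b = 1 := by nlinarith [sq_nonneg (b - 1), sq_nonneg (b + 1), sq_nonneg b]
  subst hb
  constructor
  · nlinarith [sq_nonneg (a - 1), sq_nonneg a]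
  · rfl
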